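/- For the finite-dimensional analogue: let P be a tensor in ℝ^{n×⋯×n} (d factors) such that for each 1 ≤ k ≤ d−1 the unfolding P_k ∈ ℝ^{n^k × n^{d−k}} has rank r_k with left singular matrix Φ_k ∈ ℝ^{n^k × r_k} (orthonormal columns spanning the column space of P_k). Then for each 2 ≤ k ≤ d−1 there exists a unique G_k ∈ ℝ^{r_{k−1} × n r_k} solving (Φ_{k−1}) G_k = reshape(Φ_k, n^{k−1} × n r_k), and a unique G_d ∈ ℝ^{r_{d−1}×n} solving Φ_{d−1} G_d = P_{d−1}, and setting G_1 = Φ_1, the tensor-train contraction G_1(i_1,:) G_2(:,i_2,:) ⋯ G_d(:,i_d) equals P(i_1,…,i_d) for all indices. -/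
import Mathlib


open BigOperators

/-- Value of a discrete tensor-train with cores `G` and ranks `r`. -/
noncomputable def ttVal {d n : ℕ} (r : ℕ → ℕ)
    (G : ∀ j : Fin d, Fin n → Matrix (Fin (r j)) (Fin (r (j + 1))) ℝ)
    (i : Fin d → Fin n) : ℝ :=
  ∑ α : ∀ k : Fin (d + 1), Fin (r k),
    ∏ j : Fin d, G j (i j) (α j.castSucc) (α j.succ)

/-- The `k`-th unfolding of a `d`-tensor. -/
def unfold {d n : ℕ} (P : (Fin d → Fin n) → ℝ) (k : ℕ) (hk : k ≤ d) :
    Matrix (Fin k → Fin n) (Fin (d - k) → Fin n) ℝ :=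
  fun a b => P fun m =>
    if h : (m : ℕ) < k then a ⟨m, h⟩
    else b ⟨(m : ℕ) - k, by have := m.isLt; omega⟩

lemma unfold_shift {e n : ℕ} (P : (Fin (e+2) → Fin n) → ℝ) (k : ℕ) (hk : k + 2 ≤ e + 2)
    (u : Fin (k+1) → Fin n) (x : Fin n) (z : Fin (e + 2 - (k+2)) → Fin n) :
    unfold P (k+1) (by omega) u
      (fun m => if hm : (m : ℕ) = 0 then x else z ⟨(m:ℕ)-1, by have := m.isLt; omega⟩)
    = unfold P (k+2) hk (fun j => if h : (j:ℕ) < k+1 then u ⟨j, h⟩ else x) z := by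
  unfold unfold
  congr 1
  funext m
  rcases Nat.lt_trichotomy (m : ℕ) (k+1) with h1 | h1 | h1
  · rw [dif_pos h1, dif_pos (show (m:ℕ) < k+2 by omega)]
    dsimp only
    rw [dif_pos h1]
  · rw [dif_neg (by omega), dif_pos (show (m:ℕ) < k+2 by omega)]
    dsimp only
    rw [dif_pos (by omega), dif_neg (by omega)]
  · rw [dif_neg (by omega), dif_neg (by omega)]
    dsimp only
    rw [dif_neg (by omega)]
    congr 1

lemma ortho_extract {ι : Type*} [Fintype ι] {R : ℕ} (Φk : ι → Fin R → ℝ)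
    (hON : ∀ a b, (∑ u, Φk u a * Φk u b) = if a = b then (1:ℝ) else 0)
    (H : Fin R → ℝ) (a : Fin R) :
    (∑ u, Φk u a * (∑ c, Φk u c * H c)) = H a := by
  have : (∑ u, Φk u a * (∑ c, Φk u c * H c))
      = ∑ c, (∑ u, Φk u a * Φk u c) * H c := by
    simp_rw [Finset.mul_sum, Finset.sum_mul]
    rw [Finset.sum_comm]
    congr 1; funext u; congr 1; funext c; ring
  rw [this]
  simp_rw [hON]
  simp [Finset.sum_ite_eq']

noncomputable def partialTT {n : ℕ} (r : ℕ → ℕ) {d : ℕ}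
    (G : ∀ j : Fin d, Fin n → Matrix (Fin (r j)) (Fin (r (j + 1))) ℝ)
    (i : Fin d → Fin n) : (k : ℕ) → k ≤ d → Fin (r 0) → Fin (r k) → ℝ
  | 0, _, a, b => if a = b then 1 else 0
  | k+1, h, a, b => ∑ c : Fin (r k),
      partialTT r G i k (Nat.le_of_succ_le h) a c * G ⟨k, h⟩ (i ⟨k, h⟩) c b

lemma partialTT_restrict {n d : ℕ} (r : ℕ → ℕ)
    (G : ∀ j : Fin (d+1), Fin n → Matrix (Fin (r j)) (Fin (r (j + 1))) ℝ)
    (i : Fin (d+1) → Fin n) :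
    ∀ (k : ℕ) (hk : k ≤ d) (a : Fin (r 0)) (b : Fin (r k)),
    partialTT r (fun j : Fin d => G j.castSucc) (fun j => i j.castSucc) k hk a b
      = partialTT r G i k (hk.trans (Nat.le_succ d)) a b := by
  intro k
  induction k with
  | zero => intro hk a b; rfl
  | succ k ih =>
      intro hk a b
      simp only [partialTT]
      refine Finset.sum_congr rfl fun c _ => ?_
      rw [ih]
      rfl

lemma key {n : ℕ} (r : ℕ → ℕ) : ∀ (d : ℕ)
    (G : ∀ j : Fin d, Fin n → Matrix (Fin (r j)) (Fin (r (j + 1))) ℝ)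
    (i : Fin d → Fin n) (b : Fin (r d)),
    (∑ α : (∀ m : Fin d, Fin (r m.castSucc)),
      ∏ j : Fin d, G j (i j)
        (Fin.snoc (α := fun m : Fin (d+1) => Fin (r m)) α b j.castSucc)
        (Fin.snoc (α := fun m : Fin (d+1) => Fin (r m)) α b j.succ))
    = ∑ a, partialTT r G i d le_rfl a b := by
  intro d
  induction d with
  | zero =>
      intro G i b
      simp [partialTT]
  | succ d ih =>
      intro G i b
      have h1 : ∀ α : (∀ m : Fin (d+1), Fin (r m.castSucc)),
          (∏ j : Fin (d+1), G j (i j)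
            (Fin.snoc (α := fun m : Fin (d+2) => Fin (r m)) α b j.castSucc)
            (Fin.snoc (α := fun m : Fin (d+2) => Fin (r m)) α b j.succ))
          = (∏ j : Fin d, G j.castSucc (i j.castSucc) (α j.castSucc) (α j.succ))
            * G (Fin.last d) (i (Fin.last d)) (α (Fin.last d)) b := by
        intro α
        rw [Fin.prod_univ_castSucc]
        simp only [Fin.succ_castSucc, Fin.snoc_castSucc, Fin.succ_last, Fin.snoc_last]
      rw [Finset.sum_congr rfl fun α _ => h1 α]
      show (∑ α : (∀ m : Fin (d+1), Fin (r m)),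
          (∏ j : Fin d, G j.castSucc (i j.castSucc) (α j.castSucc) (α j.succ))
            * G (Fin.last d) (i (Fin.last d)) (α (Fin.last d)) b)
        = ∑ a, partialTT r G i (d+1) le_rfl a b
      rw [← Equiv.sum_comp (Fin.snocEquiv (fun m : Fin (d+1) => Fin (r m)))]
      rw [Fintype.sum_prod_type]
      simp only [Fin.snocEquiv_apply, Fin.snoc_last]
      calc (∑ c : Fin (r d), ∑ α' : (∀ m : Fin d, Fin (r m.castSucc)),
              (∏ j : Fin d, G j.castSucc (i j.castSucc)
                (Fin.snoc (α := fun m : Fin (d+1) => Fin (r m)) α' c j.castSucc)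
                (Fin.snoc (α := fun m : Fin (d+1) => Fin (r m)) α' c j.succ))
              * G (Fin.last d) (i (Fin.last d)) c b)
          = ∑ c : Fin (r d), (∑ a, partialTT r G i d (Nat.le_succ d) a c)
              * G (Fin.last d) (i (Fin.last d)) c b := by
            refine Finset.sum_congr rfl fun c _ => ?_
            rw [← Finset.sum_mul]
            congr 1
            rw [ih (fun j => G j.castSucc) (fun j => i j.castSucc) c]
            refine Finset.sum_congr rfl fun a _ => ?_
            exact partialTT_restrict r G i d le_rfl a c
        _ = ∑ a, partialTT r G i (d+1) le_rfl a b := by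
            simp only [partialTT, Finset.sum_mul]
            rw [Finset.sum_comm]
            rfl

lemma ttVal_eq {n : ℕ} (r : ℕ → ℕ) {d : ℕ}
    (G : ∀ j : Fin d, Fin n → Matrix (Fin (r j)) (Fin (r (j + 1))) ℝ)
    (i : Fin d → Fin n) :
    ttVal r G i = ∑ a : Fin (r 0), ∑ b : Fin (r d), partialTT r G i d le_rfl a b := by
  rw [ttVal]
  rw [← Equiv.sum_comp (Fin.snocEquiv (fun k : Fin (d+1) => Fin (r k)))]
  rw [Fintype.sum_prod_type]
  simp only [Fin.snocEquiv_apply]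
  refine Eq.trans (Finset.sum_congr rfl fun b _ => key r d G i b) ?_
  exact Finset.sum_comm


/-- finite-dimensional core determining equations: if each
unfolding `P_k` of a `d`-tensor `P` (here `d = e + 2 ≥ 2`) has rank `r k` with
orthonormal left singular matrix `Φ k` whose columns span the column space of
`P_k`, then the system of core determining equations
`G₁ = Φ₁`, `Φ_{k−1} G_k = Φ_k` (`2 ≤ k ≤ d−1`), `Φ_{d−1} G_d = P_{d−1}`
has a unique solution, and any solution gives the exact tensor-train
representation of `P`. -/
theorem stmt_1 (e n : ℕ) (r : ℕ → ℕ) (h0 : r 0 = 1) (hdd : r (e + 2) = 1)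
    (P : (Fin (e + 2) → Fin n) → ℝ)
    (Φ : (k : ℕ) → (Fin k → Fin n) → Fin (r k) → ℝ)
    (hON : ∀ k, 1 ≤ k → k ≤ e + 1 → ∀ α β : Fin (r k),
      (∑ u : Fin k → Fin n, Φ k u α * Φ k u β) = if α = β then (1:ℝ) else 0)
    (hrank : ∀ k (h1 : 1 ≤ k) (h2 : k ≤ e + 1),
      Matrix.rank (unfold P k (by omega)) = r k)
    (hcol : ∀ k (h1 : 1 ≤ k) (h2 : k ≤ e + 1),
      (∃ C : Fin (r k) → (Fin (e + 2 - k) → Fin n) → ℝ,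
        ∀ u z, unfold P k (by omega) u z = ∑ α, Φ k u α * C α z) ∧
      (∃ D : (Fin (e + 2 - k) → Fin n) → Fin (r k) → ℝ,
        ∀ u α, Φ k u α = ∑ z, unfold P k (by omega) u z * D z α)) :
    let CDE : (∀ j : Fin (e + 2), Fin n →
        Matrix (Fin (r j)) (Fin (r (j + 1))) ℝ) → Prop := fun G =>
      (∀ (x : Fin n) (a : Fin (r 0)) (β : Fin (r 1)),
        G ⟨0, by omega⟩ x a β = Φ 1 (fun _ => x) β) ∧
      (∀ (k : ℕ) (h2 : k + 2 ≤ e + 1),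
        ∀ (u : Fin (k + 1) → Fin n) (x : Fin n) (β : Fin (r (k + 2))),
          (∑ a : Fin (r (k + 1)),
              Φ (k + 1) u a * G ⟨k + 1, by omega⟩ x a β)
            = Φ (k + 2)
                (fun j => if h : (j : ℕ) < k + 1 then u ⟨j, h⟩ else x) β) ∧
      (∀ (u : Fin (e + 1) → Fin n) (x : Fin n) (β : Fin (r (e + 2))),
        (∑ a : Fin (r (e + 1)),
            Φ (e + 1) u a * G ⟨e + 1, by omega⟩ x a β)
          = unfold P (e + 1) (by omega) u (fun _ => x))
    (∃! G, CDE G) ∧ (∀ G, CDE G → ∀ i, ttVal r G i = P i) := by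
  intro CDE
  classical
  choose C hC using fun k h1 h2 => (hcol k h1 h2).1
  choose D hD using fun k h1 h2 => (hcol k h1 h2).2
  -- pairwise uniqueness
  have hpair : ∀ G G', CDE G → CDE G' → G = G' := by
    rintro G G' ⟨a0, amid, alast⟩ ⟨b0, bmid, blast⟩
    funext j x a β
    obtain ⟨jv, hj⟩ := j
    cases jv with
    | zero => exact (a0 x a β).trans (b0 x a β).symm
    | succ k =>
      by_cases hke : k + 1 = e + 1
      · obtain rfl : e = k := by omega
        have heq : ∀ u, (∑ c, Φ (e+1) u c * G ⟨e+1, hj⟩ x c β)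
            = ∑ c, Φ (e+1) u c * G' ⟨e+1, hj⟩ x c β :=
          fun u => (alast u x β).trans (blast u x β).symm
        calc G ⟨e+1, hj⟩ x a β
            = ∑ u, Φ (e+1) u a * (∑ c, Φ (e+1) u c * G ⟨e+1, hj⟩ x c β) :=
              (ortho_extract (Φ (e+1)) (hON (e+1) (by omega) (by omega))
                (fun c => G ⟨e+1, hj⟩ x c β) a).symm
          _ = ∑ u, Φ (e+1) u a * (∑ c, Φ (e+1) u c * G' ⟨e+1, hj⟩ x c β) :=
              Finset.sum_congr rfl fun u _ => by rw [heq u]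
          _ = G' ⟨e+1, hj⟩ x a β :=
              ortho_extract (Φ (e+1)) (hON (e+1) (by omega) (by omega))
                (fun c => G' ⟨e+1, hj⟩ x c β) a
      · have h2 : k + 2 ≤ e + 1 := by omega
        have heq : ∀ u, (∑ c, Φ (k+1) u c * G ⟨k+1, hj⟩ x c β)
            = ∑ c, Φ (k+1) u c * G' ⟨k+1, hj⟩ x c β :=
          fun u => (amid k h2 u x β).trans (bmid k h2 u x β).symm
        calc G ⟨k+1, hj⟩ x a β
            = ∑ u, Φ (k+1) u a * (∑ c, Φ (k+1) u c * G ⟨k+1, hj⟩ x c β) :=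
              (ortho_extract (Φ (k+1)) (hON (k+1) (by omega) (by omega))
                (fun c => G ⟨k+1, hj⟩ x c β) a).symm
          _ = ∑ u, Φ (k+1) u a * (∑ c, Φ (k+1) u c * G' ⟨k+1, hj⟩ x c β) :=
              Finset.sum_congr rfl fun u _ => by rw [heq u]
          _ = G' ⟨k+1, hj⟩ x a β :=
              ortho_extract (Φ (k+1)) (hON (k+1) (by omega) (by omega))
                (fun c => G' ⟨k+1, hj⟩ x c β) a
  -- existence
  obtain ⟨Gd, hGd0, hGdmid, hGdlast⟩ :
      ∃ Gd : (∀ j : Fin (e+2), Fin n → Matrix (Fin (r j)) (Fin (r (j+1))) ℝ),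
        (∀ (x : Fin n) (a : Fin (r 0)) (β : Fin (r 1)),
          Gd ⟨0, by omega⟩ x a β = Φ 1 (fun _ => x) β) ∧
        (∀ (k : ℕ) (h2 : k+2 ≤ e+1) (x : Fin n) (a : Fin (r (k+1)))
            (β : Fin (r (k+2))),
          Gd ⟨k+1, by omega⟩ x a β
            = ∑ z : Fin (e+2-(k+2)) → Fin n,
                C (k+1) (by omega) (by omega) a
                  (fun m => if hm : (m:ℕ) = 0 then x
                    else z ⟨(m:ℕ)-1, by have := m.isLt; omega⟩)
                * D (k+2) (by omega) (by omega) z β) ∧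
        (∀ (x : Fin n) (a : Fin (r (e+1))) (β : Fin (r (e+2))),
          Gd ⟨e+1, by omega⟩ x a β = C (e+1) (by omega) (by omega) a (fun _ => x)) := by
    refine ⟨fun j x a β =>
      if hj0 : (j:ℕ) = 0 then Φ 1 (fun _ => x) (Fin.cast (by rw [hj0]) β)
      else if hjl : (j:ℕ) = e+1 then
        C (e+1) (by omega) (by omega) (Fin.cast (by rw [hjl]) a) (fun _ => x)
      else
        ∑ z : Fin (e+2-((j:ℕ)+1)) → Fin n,
          C (j:ℕ) (by omega) (by have := j.isLt; omega) a
            (fun m => if hm : (m:ℕ) = 0 then x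
              else z ⟨(m:ℕ)-1, by have := m.isLt; have := j.isLt; omega⟩)
          * D ((j:ℕ)+1) (by omega) (by have := j.isLt; omega) z β, ?_, ?_, ?_⟩
    · intro x a β
      rfl
    · intro k h2 x a β
      dsimp only
      rw [dif_neg (by omega), dif_neg (by omega)]
    · intro x a β
      dsimp only
      rw [dif_neg (by omega), dif_pos rfl]
      rfl
  have hCDE : CDE Gd := by
    refine ⟨hGd0, ?_, ?_⟩
    · intro k h2 u x β
      calc (∑ a : Fin (r (k+1)), Φ (k+1) u a * Gd ⟨k+1, by omega⟩ x a β)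
          = ∑ a : Fin (r (k+1)), Φ (k+1) u a *
              (∑ z : Fin (e+2-(k+2)) → Fin n,
                C (k+1) (by omega) (by omega) a
                  (fun m => if hm : (m:ℕ) = 0 then x
                    else z ⟨(m:ℕ)-1, by have := m.isLt; omega⟩)
                * D (k+2) (by omega) (by omega) z β) :=
            Finset.sum_congr rfl fun a _ => by rw [hGdmid k h2 x a β]
        _ = ∑ z : Fin (e+2-(k+2)) → Fin n,
              (∑ a, Φ (k+1) u a * C (k+1) (by omega) (by omega) a
                  (fun m => if hm : (m:ℕ) = 0 then x
                    else z ⟨(m:ℕ)-1, by have := m.isLt; omega⟩))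
                * D (k+2) (by omega) (by omega) z β := by
            simp_rw [Finset.mul_sum, Finset.sum_mul]
            rw [Finset.sum_comm]
            exact Finset.sum_congr rfl fun z _ => Finset.sum_congr rfl fun a _ => by ring
        _ = ∑ z : Fin (e+2-(k+2)) → Fin n,
              unfold P (k+1) (by omega) u
                (fun m => if hm : (m:ℕ) = 0 then x
                    else z ⟨(m:ℕ)-1, by have := m.isLt; omega⟩)
                * D (k+2) (by omega) (by omega) z β :=
            Finset.sum_congr rfl fun z _ => by
              rw [← hC (k+1) (by omega) (by omega) u]
        _ = ∑ z : Fin (e+2-(k+2)) → Fin n,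
              unfold P (k+2) (by omega)
                (fun j => if h : (j : ℕ) < k + 1 then u ⟨j, h⟩ else x) z
                * D (k+2) (by omega) (by omega) z β :=
            Finset.sum_congr rfl fun z _ => by
              rw [unfold_shift P k (by omega) u x z]
        _ = Φ (k + 2) (fun j => if h : (j : ℕ) < k + 1 then u ⟨j, h⟩ else x) β :=
            (hD (k+2) (by omega) (by omega) _ β).symm
    · intro u x β
      calc (∑ a : Fin (r (e+1)), Φ (e+1) u a * Gd ⟨e+1, by omega⟩ x a β)
          = ∑ a : Fin (r (e+1)), Φ (e+1) u a
              * C (e+1) (by omega) (by omega) a (fun _ => x) :=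
            Finset.sum_congr rfl fun a _ => by rw [hGdlast x a β]
        _ = unfold P (e + 1) (by omega) u (fun _ => x) :=
            (hC (e+1) (by omega) (by omega) u (fun _ => x)).symm
  refine ⟨⟨Gd, hCDE, fun G' h' => hpair G' Gd h' hCDE⟩, ?_⟩
  -- correctness
  rintro G ⟨g0, gmid, glast⟩ i
  rw [ttVal_eq r G i]
  have main : ∀ (k : ℕ) (h1 : 1 ≤ k) (h2 : k ≤ e+1) (b : Fin (r k)),
      (∑ a, partialTT r G i k (by omega) a b)
        = Φ k (fun m : Fin k => i ⟨m, by have := m.isLt; omega⟩) b := by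
    intro k
    induction k with
    | zero => intro h1; omega
    | succ k ih =>
      intro h1 h2 b
      by_cases hk : k = 0
      · subst hk
        have e1 : (∑ a : Fin (r 0), partialTT r G i (0+1) (by omega) a b)
            = ∑ _a : Fin (r 0), Φ 1 (fun _ => i ⟨0, by omega⟩) b := by
          refine Finset.sum_congr rfl fun a _ => ?_
          have e2 : (∑ c : Fin (r 0), (if a = c then (1:ℝ) else 0)
              * G ⟨0, by omega⟩ (i ⟨0, by omega⟩) c b)
              = G ⟨0, by omega⟩ (i ⟨0, by omega⟩) a b := by simp
          exact e2.trans (g0 (i ⟨0, by omega⟩) a b)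
        rw [e1, Finset.sum_const, Finset.card_univ, Fintype.card_fin, h0, one_smul]
        refine congrArg (fun v => Φ 1 v b) (funext fun m => ?_)
        congr 1
        exact Fin.ext (show (0:ℕ) = (m:ℕ) by have := m.isLt; omega)
      · obtain ⟨k', rfl⟩ : ∃ k', k = k' + 1 := ⟨k - 1, by omega⟩
        have step : (∑ a, partialTT r G i (k'+1+1) (by omega) a b)
            = ∑ c : Fin (r (k'+1)),
                Φ (k'+1) (fun m : Fin (k'+1) => i ⟨m, by have := m.isLt; omega⟩) c
                  * G ⟨k'+1, by omega⟩ (i ⟨k'+1, by omega⟩) c b := by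
          show (∑ a, ∑ c : Fin (r (k'+1)),
              partialTT r G i (k'+1) (by omega) a c
                * G ⟨k'+1, by omega⟩ (i ⟨k'+1, by omega⟩) c b) = _
          rw [Finset.sum_comm]
          refine Finset.sum_congr rfl fun c _ => ?_
          rw [← Finset.sum_mul, ih (by omega) (by omega) c]
        rw [step, gmid k' (by omega)
          (fun m : Fin (k'+1) => i ⟨m, by have := m.isLt; omega⟩)
          (i ⟨k'+1, by omega⟩) b]
        refine congrArg (fun v => Φ (k'+2) v b) (funext fun j => ?_)
        by_cases hj : (j:ℕ) < k'+1
        · rw [dif_pos hj]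
        · rw [dif_neg hj]
          congr 1
          exact Fin.ext (show (k'+1:ℕ) = (j:ℕ) by have := j.isLt; omega)
  have last : ∀ b : Fin (r (e+2)),
      (∑ a, partialTT r G i (e+2) le_rfl a b) = P i := by
    intro b
    have step : (∑ a, partialTT r G i (e+2) le_rfl a b)
        = ∑ c : Fin (r (e+1)),
            Φ (e+1) (fun m : Fin (e+1) => i ⟨m, by have := m.isLt; omega⟩) c
              * G ⟨e+1, by omega⟩ (i ⟨e+1, by omega⟩) c b := by
      show (∑ a, ∑ c : Fin (r (e+1)),
          partialTT r G i (e+1) (by omega) a c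
            * G ⟨e+1, by omega⟩ (i ⟨e+1, by omega⟩) c b) = _
      rw [Finset.sum_comm]
      refine Finset.sum_congr rfl fun c _ => ?_
      rw [← Finset.sum_mul, main (e+1) (by omega) le_rfl c]
    rw [step, glast (fun m : Fin (e+1) => i ⟨m, by have := m.isLt; omega⟩)
      (i ⟨e+1, by omega⟩) b]
    show P (fun m => if h : (m:ℕ) < e+1
        then i ⟨m, by have := m.isLt; omega⟩ else i ⟨e+1, by omega⟩) = P i
    congr 1
    funext m
    by_cases hm : (m:ℕ) < e+1
    · rw [dif_pos hm]
    · rw [dif_neg hm]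
      congr 1
      exact Fin.ext (show (e+1:ℕ) = (m:ℕ) by have := m.isLt; omega)
  rw [Finset.sum_comm]
  rw [Finset.sum_congr rfl fun b _ => last b]
  rw [Finset.sum_const, Finset.card_univ, Fintype.card_fin, hdd, one_smul]
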